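/- arXiv:1409.0488 — 5 statements merged into one kernel-verified Lean document; each statement's English description precedes it below -/
import Mathlib

section
/- For all n ≥ 1, the Kentucky-2 sequence satisfies a(2n) = 2^n and a(2n−1) = (2^{n+1} + (−1)^n)/3. -/
/-- The Kentucky-2 sequence: `a 1 = 1`, `a 2 = 2`, `a 3 = 3`, `a 4 = 4`, and
`a (n+4) = a (n+2) + 2 * a n` for all `n ≥ 1`. -/
def kent : ℕ → ℕ
  | 0 => 0
  | 1 => 1
  | 2 => 2
  | 3 => 3
  | 4 => 4
  | n + 5 => kent (n + 3) + 2 * kent (n + 1)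

private def P (k : ℕ) : Prop :=
  kent (2 * k) = 2 ^ k ∧ (kent (2 * k - 1) : ℚ) = (2 ^ (k + 1) + (-1) ^ k) / 3

private lemma aux : ∀ n : ℕ, P (n + 1) ∧ P (n + 2) := by
  intro n
  induction n with
  | zero =>
    constructor <;> constructor <;> norm_num [P, kent]
  | succ m ih =>
    refine ⟨ih.2, ?_, ?_⟩
    · have h1 := ih.1.1
      have h2 := ih.2.1
      have : 2 * (m + 3) = 2 * (m + 1) + 4 := by ring
      rw [this]
      show kent (2 * (m + 1) + 4) = _
      have e : 2 * (m + 1) + 4 = (2 * m + 1) + 5 := by ring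
      rw [e, kent]
      have e2 : 2 * m + 1 + 3 = 2 * (m + 2) := by ring
      have e3 : 2 * m + 1 + 1 = 2 * (m + 1) := by ring
      rw [e2, e3, h1, h2]; ring
    · have h1 := ih.1.2
      have h2 := ih.2.2
      have e : 2 * (m + 3) - 1 = (2 * m) + 5 := by omega
      rw [e, kent]
      have e2 : 2 * m + 3 = 2 * (m + 2) - 1 := by omega
      have e3 : 2 * m + 1 = 2 * (m + 1) - 1 := by omega
      push_cast
      rw [e2, e3]
      rw [h1, h2]
      ring

/-- For all `n ≥ 1`, `a (2n) = 2 ^ n` and `a (2n - 1) = (2 ^ (n+1) + (-1) ^ n) / 3`. -/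
theorem kentucky_closed_form (n : ℕ) (hn : 1 ≤ n) :
    kent (2 * n) = 2 ^ n ∧
    (kent (2 * n - 1) : ℚ) = (2 ^ (n + 1) + (-1) ^ n) / 3 := by
  obtain ⟨m, rfl⟩ := Nat.exists_eq_add_of_le hn
  have := (aux m).1
  rw [Nat.add_comm 1 m]; exact this
end

section
/- For all n ≥ 2, the Kentucky-2 sequence satisfies a(2n) = a(2n−1) + a(2n−3), a(2n+1) = a(2n) + a(2n−3), and a(2n) = 2·a(2n−2). -/
lemma kent_rec (n : ℕ) : kent (n + 5) = kent (n + 3) + 2 * kent (n + 1) := rfl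

lemma kent_aux (m : ℕ) :
    kent (2 * m + 4) = kent (2 * m + 3) + kent (2 * m + 1) ∧
    kent (2 * m + 5) = kent (2 * m + 4) + kent (2 * m + 1) ∧
    kent (2 * m + 4) = 2 * kent (2 * m + 2) := by
  induction m with
  | zero => refine ⟨?_, ?_, ?_⟩ <;> simp [kent]
  | succ m ih =>
    obtain ⟨h1, h2, h3⟩ := ih
    have r1 := kent_rec (2 * m + 1)
    have r2 := kent_rec (2 * m + 2)
    have e1 : 2 * (m + 1) + 4 = 2 * m + 1 + 5 := by ring
    have e2 : 2 * (m + 1) + 5 = 2 * m + 2 + 5 := by ring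
    have e3 : 2 * (m + 1) + 3 = 2 * m + 5 := by ring
    have e4 : 2 * (m + 1) + 1 = 2 * m + 3 := by ring
    have e5 : 2 * (m + 1) + 2 = 2 * m + 4 := by ring
    rw [e2, e3, e5, e4, e1]
    have e7 : 2 * m + 1 + 3 = 2 * m + 4 := by ring
    have e8 : 2 * m + 1 + 1 = 2 * m + 2 := by ring
    have e9 : 2 * m + 2 + 3 = 2 * m + 5 := by ring
    have e10 : 2 * m + 2 + 1 = 2 * m + 3 := by ring
    rw [e7, e8] at r1
    rw [e9, e10] at r2
    omega

/-- For all `n ≥ 2`: `a (2n) = a (2n-1) + a (2n-3)`, `a (2n+1) = a (2n) + a (2n-3)`,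
and `a (2n) = 2 * a (2n-2)`. -/
theorem kentucky_recurrences (n : ℕ) (hn : 2 ≤ n) :
    kent (2 * n) = kent (2 * n - 1) + kent (2 * n - 3) ∧
    kent (2 * n + 1) = kent (2 * n) + kent (2 * n - 3) ∧
    kent (2 * n) = 2 * kent (2 * n - 2) := by
  obtain ⟨m, rfl⟩ : ∃ m, n = m + 2 := ⟨n - 2, by omega⟩
  have h := kent_aux m
  have e1 : 2 * (m + 2) = 2 * m + 4 := by ring
  have e2 : 2 * (m + 2) - 1 = 2 * m + 3 := by omega
  have e3 : 2 * (m + 2) - 3 = 2 * m + 1 := by omega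
  have e4 : 2 * (m + 2) + 1 = 2 * m + 5 := by ring
  have e5 : 2 * (m + 2) - 2 = 2 * m + 2 := by omega
  rw [e2, e3, e5, e4, e1]
  exact h
end

section
/- For all n ≥ 2 and all k ≥ 1, p(n,k) = 2·p(n−2, k−1) + p(n−1, k). -/
open scoped Classical

/-- A finite set `S` of positive integers is Kentucky-2 legal if for all distinct
`i, j ∈ S` we have `|⌈i/2⌉ - ⌈j/2⌉| ≥ 2`. -/
def KLegal (S : Finset ℕ) : Prop :=
  (∀ i ∈ S, 1 ≤ i) ∧
  ∀ i ∈ S, ∀ j ∈ S, i ≠ j → 2 ≤ |(((i + 1) / 2 : ℕ) : ℤ) - (((j + 1) / 2 : ℕ) : ℤ)|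

/-- `p n k` is the number of Kentucky-2 legal subsets of `{1,…,2n}` of cardinality `k`. -/
noncomputable def p (n k : ℕ) : ℕ :=
  ((Finset.Icc 1 (2 * n)).powerset.filter (fun S => KLegal S ∧ S.card = k)).card

lemma klegal_subset {S T : Finset ℕ} (h : KLegal S) (hT : T ⊆ S) : KLegal T :=
  ⟨fun i hi => h.1 i (hT hi), fun i hi j hj hij => h.2 i (hT hi) j (hT hj) hij⟩

/-- Counting legal sets containing a fixed top-bin element. -/
lemma count_top (m j a : ℕ) (ha : a = 2 * m + 3 ∨ a = 2 * m + 4) :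
    ((Finset.Icc 1 (2 * (m + 2))).powerset.filter
        (fun S => (KLegal S ∧ S.card = j + 1) ∧ a ∈ S)).card = p m j := by
  rw [p]
  refine Finset.card_bij' (fun S _ => S.erase a) (fun T _ => insert a T)
    ?hi ?hj ?left ?right
  case hi =>
    intro S hS
    simp only [Finset.mem_filter, Finset.mem_powerset] at hS ⊢
    obtain ⟨hsub, ⟨hleg, hcard⟩, haS⟩ := hS
    refine ⟨?_, klegal_subset hleg (Finset.erase_subset _ _), ?_⟩
    · intro i hi
      have hiS := Finset.mem_of_mem_erase hi
      have hne : i ≠ a := Finset.ne_of_mem_erase hi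
      have h1 : 1 ≤ i := hleg.1 i hiS
      have h2 : i ≤ 2 * (m + 2) := (Finset.mem_Icc.mp (hsub hiS)).2
      have h3 := hleg.2 i hiS a haS hne
      rw [le_abs] at h3
      simp only [Finset.mem_Icc]
      omega
    · simp [Finset.card_erase_of_mem haS, hcard]
  case hj =>
    intro T hT
    simp only [Finset.mem_filter, Finset.mem_powerset] at hT ⊢
    obtain ⟨hsub, hleg, hcard⟩ := hT
    have haT : a ∉ T := by
      intro h
      have := (Finset.mem_Icc.mp (hsub h)).2
      omega
    have hbnd : ∀ i ∈ T, 1 ≤ i ∧ i ≤ 2 * m := by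
      intro i hi
      exact ⟨hleg.1 i hi, (Finset.mem_Icc.mp (hsub hi)).2⟩
    refine ⟨?_, ⟨⟨⟨?_, ?_⟩, ?_⟩, Finset.mem_insert_self a T⟩⟩
    · intro i hi
      rcases Finset.mem_insert.mp hi with rfl | hi
      · simp only [Finset.mem_Icc]; omega
      · have := hbnd i hi
        simp only [Finset.mem_Icc]; omega
    · intro i hi
      rcases Finset.mem_insert.mp hi with rfl | hi
      · omega
      · exact hleg.1 i hi
    · intro x hx y hy hxy
      rcases Finset.mem_insert.mp hx with h1 | h1 <;>
        rcases Finset.mem_insert.mp hy with h2 | h2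
      · exact absurd (h1.trans h2.symm) hxy
      · subst h1
        have := hbnd y h2
        rw [le_abs]; omega
      · subst h2
        have := hbnd x h1
        rw [le_abs]; omega
      · exact hleg.2 x h1 y h2 hxy
    · simp [Finset.card_insert_of_notMem haT, hcard]
  case left =>
    intro S hS
    simp only [Finset.mem_filter] at hS
    exact Finset.insert_erase hS.2.2
  case right =>
    intro T hT
    simp only [Finset.mem_filter, Finset.mem_powerset] at hT
    have haT : a ∉ T := by
      intro h
      have := (Finset.mem_Icc.mp (hT.1 h)).2
      omega
    exact Finset.erase_insert haT

set_option maxHeartbeats 1600000 in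
/-- For all `n ≥ 2` and `k ≥ 1`, `p n k = 2 * p (n-2) (k-1) + p (n-1) k`. -/
theorem kentucky_p_recurrence (n k : ℕ) (hn : 2 ≤ n) (hk : 1 ≤ k) :
    p n k = 2 * p (n - 2) (k - 1) + p (n - 1) k := by
  obtain ⟨m, rfl⟩ : ∃ m, n = m + 2 := ⟨n - 2, by omega⟩
  obtain ⟨j, rfl⟩ : ∃ j, k = j + 1 := ⟨k - 1, by omega⟩
  simp only [Nat.add_sub_cancel]
  have hm1 : m + 2 - 1 = m + 1 := by omega
  rw [hm1]
  set A := (Finset.Icc 1 (2 * (m + 2))).powerset.filter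
      (fun S => KLegal S ∧ S.card = j + 1) with hA
  have hsplit1 : (A.filter (fun S => 2 * m + 3 ∈ S)).card
      + (A.filter (fun S => 2 * m + 3 ∉ S)).card = A.card :=
    Finset.card_filter_add_card_filter_not _
  have hsplit2 : ((A.filter (fun S => 2 * m + 3 ∉ S)).filter (fun S => 2 * m + 4 ∈ S)).card
      + ((A.filter (fun S => 2 * m + 3 ∉ S)).filter (fun S => 2 * m + 4 ∉ S)).card
      = (A.filter (fun S => 2 * m + 3 ∉ S)).card :=
    Finset.card_filter_add_card_filter_not _
  have e1 : (A.filter (fun S => 2 * m + 3 ∈ S)).card = p m j := by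
    have hset : A.filter (fun S => 2 * m + 3 ∈ S)
        = (Finset.Icc 1 (2 * (m + 2))).powerset.filter
            (fun S => (KLegal S ∧ S.card = j + 1) ∧ 2 * m + 3 ∈ S) := by
      ext S
      simp only [hA, Finset.mem_filter]
      tauto
    rw [hset, count_top m j (2 * m + 3) (Or.inl rfl)]
  have e2 : ((A.filter (fun S => 2 * m + 3 ∉ S)).filter (fun S => 2 * m + 4 ∈ S)).card
      = p m j := by
    have hset : (A.filter (fun S => 2 * m + 3 ∉ S)).filter (fun S => 2 * m + 4 ∈ S)
        = (Finset.Icc 1 (2 * (m + 2))).powerset.filter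
            (fun S => (KLegal S ∧ S.card = j + 1) ∧ 2 * m + 4 ∈ S) := by
      ext S
      simp only [hA, Finset.mem_filter]
      constructor
      · rintro ⟨⟨⟨hsub, hP⟩, _⟩, h4⟩
        exact ⟨hsub, hP, h4⟩
      · rintro ⟨hsub, hP, h4⟩
        refine ⟨⟨⟨hsub, hP⟩, ?_⟩, h4⟩
        intro h3
        have := hP.1.2 (2 * m + 3) h3 (2 * m + 4) h4 (by omega)
        rw [le_abs] at this
        omega
    rw [hset, count_top m j (2 * m + 4) (Or.inr rfl)]
  have e3 : ((A.filter (fun S => 2 * m + 3 ∉ S)).filter (fun S => 2 * m + 4 ∉ S)).card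
      = p (m + 1) (j + 1) := by
    have hset : (A.filter (fun S => 2 * m + 3 ∉ S)).filter (fun S => 2 * m + 4 ∉ S)
        = (Finset.Icc 1 (2 * (m + 1))).powerset.filter
            (fun S => KLegal S ∧ S.card = j + 1) := by
      ext S
      simp only [hA, Finset.mem_filter, Finset.mem_powerset]
      constructor
      · rintro ⟨⟨⟨hsub, hP⟩, h3⟩, h4⟩
        refine ⟨?_, hP⟩
        intro i hi
        have := Finset.mem_Icc.mp (hsub hi)
        have hi3 : i ≠ 2 * m + 3 := fun h => h3 (h ▸ hi)
        have hi4 : i ≠ 2 * m + 4 := fun h => h4 (h ▸ hi)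
        simp only [Finset.mem_Icc]
        omega
      · rintro ⟨hsub, hP⟩
        have h3 : 2 * m + 3 ∉ S := by
          intro h
          have := (Finset.mem_Icc.mp (hsub h)).2; omega
        have h4 : 2 * m + 4 ∉ S := by
          intro h
          have := (Finset.mem_Icc.mp (hsub h)).2; omega
        refine ⟨⟨⟨fun i hi => ?_, hP⟩, h3⟩, h4⟩
        have := Finset.mem_Icc.mp (hsub hi)
        simp only [Finset.mem_Icc]
        omega
    rw [hset, p]
  have e0 : p (m + 2) (j + 1) = A.card := by rw [hA, p]
  omega
end

section
/- For all n ≥ 3 and all real y > 0, Σ_{k≥0} p(n,k)·y^k = (√(2y))^{n+1} · F_{n+2}(1/√(2y)), where F_m denotes the m-th Fibonacci polynomial. -/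
open scoped Classical

/-- The Fibonacci polynomials: `F 0 = 0`, `F 1 = 1`, `F (n+2) x = x * F (n+1) x + F n x`. -/
def fibPoly : ℕ → ℝ → ℝ
  | 0, _ => 0
  | 1, _ => 1
  | n + 2, x => x * fibPoly (n + 1) x + fibPoly n x

lemma klegal_mono {S T : Finset ℕ} (hTS : T ⊆ S) (h : KLegal S) : KLegal T :=
  ⟨fun i hi => h.1 i (hTS hi), fun i hi j hj hij => h.2 i (hTS hi) j (hTS hj) hij⟩

lemma klegal_empty : KLegal ∅ := ⟨by simp, by simp⟩

noncomputable def g (y : ℝ) (n : ℕ) : ℝ :=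
  ∑ S ∈ (Finset.Icc 1 (2 * n)).powerset.filter KLegal, y ^ S.card

lemma sum_part (y : ℝ) (n a : ℕ) (ha1 : 2*n+3 ≤ a) (ha2 : a ≤ 2*n+4) :
    ∑ S ∈ (((Finset.Icc 1 (2*n+4)).powerset.filter KLegal).filter (fun S => a ∈ S)),
      y ^ S.card = y * g y n := by
  rw [g, Finset.mul_sum]
  refine Finset.sum_nbij' (i := fun S => S.erase a) (j := fun S => insert a S)
    ?_ ?_ ?_ ?_ ?_
  · intro S hS
    simp only [Finset.mem_filter, Finset.mem_powerset] at hS ⊢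
    obtain ⟨⟨hsub, hleg⟩, haS⟩ := hS
    refine ⟨?_, klegal_mono (Finset.erase_subset _ _) hleg⟩
    intro x hx
    have hxS := Finset.mem_of_mem_erase hx
    have hxa : x ≠ a := Finset.ne_of_mem_erase hx
    have hx1 : 1 ≤ x := hleg.1 x hxS
    have hx2 : x ≤ 2*n+4 := (Finset.mem_Icc.mp (hsub hxS)).2
    have habs := hleg.2 x hxS a haS hxa
    rw [le_abs] at habs
    simp only [Finset.mem_Icc]
    omega
  · intro S hS
    simp only [Finset.mem_filter, Finset.mem_powerset] at hS ⊢
    obtain ⟨hsub, hleg⟩ := hS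
    have hbound : ∀ x ∈ S, 1 ≤ x ∧ x ≤ 2*n := by
      intro x hx; exact Finset.mem_Icc.mp (hsub hx)
    have haS : a ∉ S := by intro h; have := hbound a h; omega
    refine ⟨⟨?_, ?_, ?_⟩, Finset.mem_insert_self a S⟩
    · intro x hx
      rcases Finset.mem_insert.mp hx with rfl | hx
      · simp only [Finset.mem_Icc]; omega
      · have := hbound x hx; simp only [Finset.mem_Icc]; omega
    · intro i hi
      rcases Finset.mem_insert.mp hi with rfl | hi
      · omega
      · exact hleg.1 i hi
    · intro i hi j hj hij
      rcases Finset.mem_insert.mp hi with hia | hi <;>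
        rcases Finset.mem_insert.mp hj with hja | hj
      · omega
      · have := hbound j hj; rw [le_abs]; omega
      · have := hbound i hi; rw [le_abs]; omega
      · exact hleg.2 i hi j hj hij
  · intro S hS
    simp only [Finset.mem_filter] at hS
    exact Finset.insert_erase hS.2
  · intro S hS
    simp only [Finset.mem_filter, Finset.mem_powerset] at hS
    apply Finset.erase_insert
    intro h
    have := Finset.mem_Icc.mp (hS.1 h)
    omega
  · intro S hS
    simp only [Finset.mem_filter] at hS
    rw [Finset.card_erase_of_mem hS.2]
    have hpos : 1 ≤ S.card := Finset.card_pos.mpr ⟨a, hS.2⟩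
    obtain ⟨c, hc⟩ : ∃ c, S.card = c + 1 := ⟨S.card - 1, by omega⟩
    rw [hc, Nat.add_sub_cancel, pow_succ]
    ring

lemma grec (y : ℝ) (n : ℕ) : g y (n+2) = g y (n+1) + 2*y * g y n := by
  have h24 : 2*(n+2) = 2*n+4 := by ring
  rw [g, h24]
  set A := (Finset.Icc 1 (2*n+4)).powerset.filter KLegal with hA
  rw [← Finset.sum_filter_add_sum_filter_not A (fun S => (2*n+4) ∈ S) (fun S => y ^ S.card),
      ← Finset.sum_filter_add_sum_filter_not (A.filter (fun S => (2*n+4) ∉ S))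
        (fun S => (2*n+3) ∈ S) (fun S => y ^ S.card)]
  have e1 : (A.filter (fun S => (2*n+4) ∉ S)).filter (fun S => (2*n+3) ∈ S)
      = A.filter (fun S => (2*n+3) ∈ S) := by
    ext S
    simp only [Finset.mem_filter, hA, Finset.mem_powerset]
    constructor
    · rintro ⟨⟨h1, _⟩, h3⟩; exact ⟨h1, h3⟩
    · rintro ⟨⟨hsub, hleg⟩, h3⟩
      refine ⟨⟨⟨hsub, hleg⟩, ?_⟩, h3⟩
      intro h4
      have := hleg.2 (2*n+3) h3 (2*n+4) h4 (by omega)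
      rw [le_abs] at this
      omega
  have e2 : (A.filter (fun S => (2*n+4) ∉ S)).filter (fun S => (2*n+3) ∉ S)
      = (Finset.Icc 1 (2*(n+1))).powerset.filter KLegal := by
    ext S
    simp only [Finset.mem_filter, hA, Finset.mem_powerset]
    constructor
    · rintro ⟨⟨⟨hsub, hleg⟩, h4⟩, h3⟩
      refine ⟨?_, hleg⟩
      intro x hx
      have := Finset.mem_Icc.mp (hsub hx)
      have hx3 : x ≠ 2*n+3 := fun h => h3 (h ▸ hx)
      have hx4 : x ≠ 2*n+4 := fun h => h4 (h ▸ hx)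
      simp only [Finset.mem_Icc]; omega
    · rintro ⟨hsub, hleg⟩
      have hb : ∀ x ∈ S, 1 ≤ x ∧ x ≤ 2*(n+1) := fun x hx => Finset.mem_Icc.mp (hsub hx)
      refine ⟨⟨⟨?_, hleg⟩, ?_⟩, ?_⟩
      · intro x hx; have := hb x hx; simp only [Finset.mem_Icc]; omega
      · intro h; have := hb _ h; omega
      · intro h; have := hb _ h; omega
  rw [e1, e2, sum_part y n (2*n+4) (by omega) (by omega),
      sum_part y n (2*n+3) (by omega) (by omega)]
  show y * g y n + (y * g y n + g y (n+1)) = g y (n+1) + 2*y * g y n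
  ring

lemma g_zero (y : ℝ) : g y 0 = 1 := by
  rw [g]
  have : (Finset.Icc 1 (2*0)).powerset.filter KLegal = {∅} := by
    ext S
    simp only [Finset.mem_filter, Finset.mem_powerset, Finset.mem_singleton]
    constructor
    · rintro ⟨hsub, -⟩
      have : Finset.Icc 1 (2*0) = (∅ : Finset ℕ) := by decide
      rw [this, Finset.subset_empty] at hsub
      exact hsub
    · rintro rfl
      exact ⟨Finset.empty_subset _, klegal_empty⟩
  rw [this]
  simp

lemma g_one (y : ℝ) : g y 1 = 1 + 2*y := by
  rw [g]
  have : (Finset.Icc 1 (2*1)).powerset.filter KLegal = {∅, {1}, {2}} := by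
    ext S
    simp only [Finset.mem_filter, Finset.mem_powerset, Finset.mem_insert, Finset.mem_singleton]
    constructor
    · rintro ⟨hsub, hleg⟩
      have hsub' : ∀ x ∈ S, x = 1 ∨ x = 2 := by
        intro x hx
        have := Finset.mem_Icc.mp (hsub hx)
        omega
      by_cases h1 : 1 ∈ S <;> by_cases h2 : 2 ∈ S
      · exfalso
        have := hleg.2 1 h1 2 h2 (by omega)
        rw [le_abs] at this
        omega
      · right; left
        ext x
        simp only [Finset.mem_singleton]
        constructor
        · intro hx; rcases hsub' x hx with rfl | rfl
          · rfl
          · exact absurd hx h2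
        · rintro rfl; exact h1
      · right; right
        ext x
        simp only [Finset.mem_singleton]
        constructor
        · intro hx; rcases hsub' x hx with rfl | rfl
          · exact absurd hx h1
          · rfl
        · rintro rfl; exact h2
      · left
        ext x
        simp only [Finset.notMem_empty, iff_false]
        intro hx
        rcases hsub' x hx with rfl | rfl
        · exact h1 hx
        · exact h2 hx
    · rintro (rfl | rfl | rfl)
      · exact ⟨Finset.empty_subset _, klegal_empty⟩
      · refine ⟨?_, ?_, ?_⟩
        · intro x hx; simp only [Finset.mem_singleton] at hx; subst hx; decide
        · intro i hi; simp only [Finset.mem_singleton] at hi; omega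
        · intro i hi j hj hij
          simp only [Finset.mem_singleton] at hi hj
          omega
      · refine ⟨?_, ?_, ?_⟩
        · intro x hx; simp only [Finset.mem_singleton] at hx; subst hx; decide
        · intro i hi; simp only [Finset.mem_singleton] at hi; omega
        · intro i hi j hj hij
          simp only [Finset.mem_singleton] at hi hj
          omega
  rw [this]
  rw [Finset.sum_insert (by decide), Finset.sum_insert (by decide), Finset.sum_singleton]
  simp
  ring

lemma tsum_eq_g (y : ℝ) (n : ℕ) : ∑' k : ℕ, (p n k : ℝ) * y ^ k = g y n := by
  rw [tsum_eq_sum (s := Finset.range (2*n+1)) ?side]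
  case side =>
    intro k hk
    simp only [Finset.mem_range, not_lt] at hk
    have hp : p n k = 0 := by
      rw [p, Finset.card_eq_zero, Finset.filter_eq_empty_iff]
      rintro S hS ⟨-, hcard⟩
      rw [Finset.mem_powerset] at hS
      have := Finset.card_le_card hS
      rw [Nat.card_Icc] at this
      omega
    rw [hp]; simp
  · rw [g]
    have hmaps : ∀ S ∈ (Finset.Icc 1 (2*n)).powerset.filter KLegal,
        S.card ∈ Finset.range (2*n+1) := by
      intro S hS
      simp only [Finset.mem_filter, Finset.mem_powerset] at hS
      have := Finset.card_le_card hS.1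
      rw [Nat.card_Icc] at this
      simp only [Finset.mem_range]
      omega
    have key := Finset.sum_fiberwise_of_maps_to hmaps (fun S => (y : ℝ) ^ S.card)
    rw [← key]
    refine Finset.sum_congr rfl ?_
    intro k hk
    have hfe : ((Finset.Icc 1 (2*n)).powerset.filter KLegal).filter (fun S => S.card = k)
        = (Finset.Icc 1 (2*n)).powerset.filter (fun S => KLegal S ∧ S.card = k) := by
      rw [Finset.filter_filter]
    rw [Finset.sum_congr rfl (fun S hS => by
      rw [(Finset.mem_filter.mp hS).2]), Finset.sum_const, hfe, p, nsmul_eq_mul]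

lemma G_rec (y : ℝ) (hy : 0 < y) (n : ℕ) :
    (Real.sqrt (2*y)) ^ (n+2+1) * fibPoly (n+2+2) (1 / Real.sqrt (2*y))
      = (Real.sqrt (2*y)) ^ (n+1+1) * fibPoly (n+1+2) (1 / Real.sqrt (2*y))
        + 2*y * ((Real.sqrt (2*y)) ^ (n+1) * fibPoly (n+2) (1 / Real.sqrt (2*y))) := by
  set s := Real.sqrt (2*y) with hs
  have hspos : 0 < s := Real.sqrt_pos.mpr (by linarith)
  have hs2 : s^2 = 2*y := Real.sq_sqrt (by linarith)
  have hsne : s ≠ 0 := ne_of_gt hspos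
  show s ^ (n+3) * (1/s * fibPoly (n+3) (1/s) + fibPoly (n+2) (1/s)) = _
  rw [← hs2]
  field_simp
  ring

/-- For all `n ≥ 3` and all real `y > 0`,
`Σ_{k≥0} p n k * y^k = (√(2y))^(n+1) * F_{n+2}(1/√(2y))`. -/
theorem kentucky_gn_fibPoly (n : ℕ) (hn : 3 ≤ n) (y : ℝ) (hy : 0 < y) :
    ∑' k : ℕ, (p n k : ℝ) * y ^ k =
      (Real.sqrt (2 * y)) ^ (n + 1) * fibPoly (n + 2) (1 / Real.sqrt (2 * y)) := by
  rw [tsum_eq_g]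
  clear hn
  induction n using Nat.twoStepInduction with
  | zero =>
    rw [g_zero]
    set s := Real.sqrt (2*y) with hs
    have hspos : 0 < s := Real.sqrt_pos.mpr (by linarith)
    show (1:ℝ) = s ^ 1 * (1/s * 1 + 0)
    field_simp
    ring
  | one =>
    rw [g_one]
    set s := Real.sqrt (2*y) with hs
    have hspos : 0 < s := Real.sqrt_pos.mpr (by linarith)
    have hs2 : s^2 = 2*y := Real.sq_sqrt (by linarith)
    show (1 + 2*y : ℝ) = s ^ 2 * (1/s * (1/s * 1 + 0) + 1)
    rw [← hs2]
    field_simp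
    ring
  | more m ih1 ih2 =>
    rw [grec, ih1, ih2, G_rec y hy]
end

section
/- There exist a constant C > 0 and an integer N such that for all n ≥ N, |μ_n − n/3 − 2/9| ≤ C·n/2^n; i.e., the mean number of summands in Kentucky-2 legal decompositions of integers in [0, a(2n+1)) equals n/3 + 2/9 + O(n/2^n). -/
set_option maxHeartbeats 1000000


open scoped Classical

/-- `μ n = (Σ_{k≥0} k * p n k) / (Σ_{k≥0} p n k)`, the mean number of summands in the
Kentucky-2 legal decompositions of integers in `[0, a (2n+1))`. -/
noncomputable def mu (n : ℕ) : ℝ :=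
  (∑' k : ℕ, (k : ℝ) * (p n k : ℝ)) / (∑' k : ℕ, (p n k : ℝ))

lemma abs2 (a b : ℕ) : 2 ≤ |((a:ℤ)) - (b:ℤ)| ↔ (a + 2 ≤ b ∨ b + 2 ≤ a) := by
  rw [le_abs]; omega

lemma klegal_insert {S : Finset ℕ} {n x : ℕ} (h : KLegal S) (hS : S ⊆ Finset.Icc 1 (2*n))
    (hx : x = 2*n+3 ∨ x = 2*n+4) : KLegal (insert x S) := by
  constructor
  · intro i hi
    rcases Finset.mem_insert.1 hi with rfl | hi
    · omega
    · exact h.1 i hi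
  · intro i hi j hj hij
    have key : ∀ m ∈ S, 2 ≤ |(((x + 1) / 2 : ℕ) : ℤ) - (((m + 1) / 2 : ℕ) : ℤ)| := by
      intro m hm
      have := Finset.mem_Icc.1 (hS hm)
      rw [abs2]; omega
    rcases Finset.mem_insert.1 hi with hi' | hi' <;> rcases Finset.mem_insert.1 hj with hj' | hj'
    · exact absurd (hi'.trans hj'.symm) hij
    · subst hi'; exact key j hj'
    · subst hj'; rw [abs_sub_comm]; exact key i hi'
    · exact h.2 i hi' j hj' hij

lemma klegal_erase_subset {S : Finset ℕ} {n x : ℕ} (h : KLegal S)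
    (hS : S ⊆ Finset.Icc 1 (2*n+4)) (hxS : x ∈ S)
    (hx : x = 2*n+3 ∨ x = 2*n+4) : S.erase x ⊆ Finset.Icc 1 (2*n) := by
  intro i hi
  have hi' := Finset.mem_erase.1 hi
  have h2 := h.2 i hi'.2 x hxS hi'.1
  have := Finset.mem_Icc.1 (hS hi'.2)
  rw [abs2] at h2
  rw [Finset.mem_Icc]
  omega

lemma p_zero (n : ℕ) : p n 0 = 1 := by
  unfold p
  have : ((Finset.Icc 1 (2*n)).powerset.filter (fun S => KLegal S ∧ S.card = 0)) = {∅} := by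
    ext S
    simp only [Finset.mem_filter, Finset.mem_powerset, Finset.mem_singleton, Finset.card_eq_zero]
    constructor
    · rintro ⟨-, -, rfl⟩; rfl
    · rintro rfl
      exact ⟨Finset.empty_subset _, ⟨fun i hi => absurd hi (Finset.notMem_empty i),
        fun i hi => absurd hi (Finset.notMem_empty i)⟩, rfl⟩
  rw [this, Finset.card_singleton]

lemma p_card_le (n k : ℕ) (h : 2*n < k) : p n k = 0 := by
  unfold p
  rw [Finset.card_eq_zero, Finset.filter_eq_empty_iff]
  rintro S hS ⟨-, hcard⟩
  have := Finset.card_le_card (Finset.mem_powerset.1 hS)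
  rw [Nat.card_Icc] at this
  omega

lemma card_with (n k x : ℕ) (hx : x = 2*n+3 ∨ x = 2*n+4) :
    ((Finset.Icc 1 (2*n+4)).powerset.filter
      (fun S => (KLegal S ∧ S.card = k+1) ∧ x ∈ S)).card = p n k := by
  unfold p
  refine Finset.card_bij' (fun S _ => S.erase x) (fun S _ => insert x S) ?_ ?_ ?_ ?_
  case refine_1 =>
    intro S hS
    simp only [Finset.mem_filter, Finset.mem_powerset] at hS ⊢
    obtain ⟨hsub, ⟨hleg, hcard⟩, hxS⟩ := hS
    refine ⟨klegal_erase_subset hleg hsub hxS hx,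
      klegal_subset hleg (Finset.erase_subset _ _), ?_⟩
    rw [Finset.card_erase_of_mem hxS, hcard]
    omega
  case refine_2 =>
    intro S hS
    simp only [Finset.mem_filter, Finset.mem_powerset] at hS ⊢
    obtain ⟨hsub, hleg, hcard⟩ := hS
    have hxn : x ∉ S := by
      intro hxS
      have := Finset.mem_Icc.1 (hsub hxS); omega
    refine ⟨?_, ⟨klegal_insert hleg hsub hx, ?_⟩, Finset.mem_insert_self _ _⟩
    · intro i hi
      rcases Finset.mem_insert.1 hi with rfl | hi
      · rw [Finset.mem_Icc]; omega
      · have := Finset.mem_Icc.1 (hsub hi); rw [Finset.mem_Icc]; omega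
    · rw [Finset.card_insert_of_notMem hxn, hcard]
  case refine_3 =>
    intro S hS
    simp only [Finset.mem_filter] at hS
    exact Finset.insert_erase hS.2.2
  case refine_4 =>
    intro S hS
    simp only [Finset.mem_filter, Finset.mem_powerset] at hS
    apply Finset.erase_insert
    intro hxS
    have := Finset.mem_Icc.1 (hS.1 hxS); omega

lemma p_rec (n k : ℕ) : p (n+2) (k+1) = p (n+1) (k+1) + 2 * p n k := by
  have h24 : 2*(n+2) = 2*n+4 := by ring
  have h22 : 2*(n+1) = 2*n+2 := by ring
  rw [p, h24, p, h22]
  set P : Finset ℕ → Prop := fun S => KLegal S ∧ S.card = k+1 with hP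
  set A := (Finset.Icc 1 (2*n+4)).powerset.filter P with hA
  have e1 : (A.filter (fun S => (2*n+3) ∈ S)).card
      + (A.filter (fun S => ¬ (2*n+3) ∈ S)).card = A.card :=
    Finset.card_filter_add_card_filter_not _
  set A' := A.filter (fun S => ¬ (2*n+3) ∈ S) with hA'
  have e2 : (A'.filter (fun S => (2*n+4) ∈ S)).card
      + (A'.filter (fun S => ¬ (2*n+4) ∈ S)).card = A'.card :=
    Finset.card_filter_add_card_filter_not _
  -- set containing 2n+3
  have c1 : (A.filter (fun S => (2*n+3) ∈ S)).card = p n k := by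
    rw [hA, Finset.filter_filter]
    exact card_with n k _ (Or.inl rfl)
  -- set avoiding 2n+3 and containing 2n+4
  have c2 : (A'.filter (fun S => (2*n+4) ∈ S)).card = p n k := by
    rw [hA', hA, Finset.filter_filter, Finset.filter_filter]
    rw [show ((Finset.Icc 1 (2*n+4)).powerset.filter
        (fun S => P S ∧ ((2*n+3) ∉ S ∧ (2*n+4) ∈ S)))
      = ((Finset.Icc 1 (2*n+4)).powerset.filter (fun S => P S ∧ (2*n+4) ∈ S)) from ?_]
    · exact card_with n k _ (Or.inr rfl)
    · ext S
      simp only [Finset.mem_filter, Finset.mem_powerset, hP]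
      constructor
      · rintro ⟨h1, h2, -, h3⟩; exact ⟨h1, h2, h3⟩
      · rintro ⟨h1, h2, h3⟩
        refine ⟨h1, h2, ?_, h3⟩
        intro hmem
        have := h2.1.2 (2*n+3) hmem (2*n+4) h3 (by omega)
        rw [abs2] at this; omega
  -- set avoiding both
  have c3 : (A'.filter (fun S => ¬ (2*n+4) ∈ S)).card
      = ((Finset.Icc 1 (2*n+2)).powerset.filter P).card := by
    congr 1
    rw [hA', hA, Finset.filter_filter, Finset.filter_filter]
    ext S
    simp only [Finset.mem_filter, Finset.mem_powerset]
    constructor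
    · rintro ⟨h1, h2, h3, h4⟩
      refine ⟨?_, h2⟩
      intro i hi
      have := Finset.mem_Icc.1 (h1 hi)
      rw [Finset.mem_Icc]
      rcases eq_or_ne i (2*n+3) with rfl | hi3
      · exact absurd hi h3
      rcases eq_or_ne i (2*n+4) with rfl | hi4
      · exact absurd hi h4
      omega
    · rintro ⟨h1, h2⟩
      have hni : ∀ m, m ∈ S → m ≤ 2*n+2 := fun m hm => (Finset.mem_Icc.1 (h1 hm)).2
      refine ⟨fun i hi => ?_, h2, fun h => by have := hni _ h; omega,
        fun h => by have := hni _ h; omega⟩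
      have := Finset.mem_Icc.1 (h1 hi); rw [Finset.mem_Icc]; omega
  have hPP : (Finset.filter P (Finset.Icc 1 (2*n+2)).powerset)
      = ((Finset.Icc 1 (2*n+2)).powerset.filter (fun S => KLegal S ∧ S.card = k+1)) := by
    ext S; simp [hP]
  rw [hPP] at c3
  omega

lemma p_one_one : p 1 1 = 2 := by
  unfold p
  have : (Finset.Icc 1 (2*1)).powerset.filter (fun S => KLegal S ∧ S.card = 1)
      = {{1}, {2}} := by
    ext S
    simp only [Finset.mem_filter, Finset.mem_powerset, Finset.mem_insert, Finset.mem_singleton,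
      Finset.card_eq_one]
    constructor
    · rintro ⟨hsub, -, a, rfl⟩
      have := Finset.mem_Icc.1 (hsub (Finset.mem_singleton_self a))
      have ha : a = 1 ∨ a = 2 := by omega
      rcases ha with rfl | rfl
      · left; rfl
      · right; rfl
    · have leg : ∀ a : ℕ, 1 ≤ a → KLegal {a} := by
        intro a ha
        refine ⟨fun i hi => ?_, fun i hi j hj hij => ?_⟩
        · rw [Finset.mem_singleton] at hi; omega
        · rw [Finset.mem_singleton] at hi hj; exact absurd (hi.trans hj.symm) hij
      rintro (rfl | rfl)
      · exact ⟨by intro i hi; rw [Finset.mem_singleton] at hi; subst hi; simp,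
          leg 1 le_rfl, ⟨1, rfl⟩⟩
      · exact ⟨by intro i hi; rw [Finset.mem_singleton] at hi; subst hi; simp,
          leg 2 one_le_two, ⟨2, rfl⟩⟩
  rw [this]
  rfl

lemma p_one_two : p 1 2 = 0 := by
  unfold p
  rw [Finset.card_eq_zero, Finset.filter_eq_empty_iff]
  rintro S hS ⟨hleg, hcard⟩
  rw [Finset.mem_powerset] at hS
  obtain ⟨a, ha, b, hb, hab⟩ := Finset.one_lt_card.1 (show 1 < S.card by omega)
  have h2 := hleg.2 a ha b hb hab
  rw [abs2] at h2
  have h3 := Finset.mem_Icc.1 (hS ha)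
  have h4 := Finset.mem_Icc.1 (hS hb)
  omega

noncomputable def TT (n : ℕ) : ℕ := ∑ k ∈ Finset.range (2*n+1), p n k
noncomputable def NN (n : ℕ) : ℕ := ∑ k ∈ Finset.range (2*n+1), k * p n k

lemma TT_ext (n m : ℕ) (h : 2*n+1 ≤ m) : ∑ k ∈ Finset.range m, p n k = TT n := by
  rw [TT]
  exact (Finset.sum_subset (Finset.range_subset_range.2 h)
    (fun x _ hx => p_card_le n x (by rw [Finset.mem_range] at hx; omega))).symm

lemma NN_ext (n m : ℕ) (h : 2*n+1 ≤ m) : ∑ k ∈ Finset.range m, k * p n k = NN n := by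
  rw [NN]
  refine (Finset.sum_subset (Finset.range_subset_range.2 h) (fun x _ hx => ?_)).symm
  rw [p_card_le n x (by rw [Finset.mem_range] at hx; omega), mul_zero]

lemma TT_rec (n : ℕ) : TT (n+2) = TT (n+1) + 2 * TT n := by
  have h5 : TT (n+2) = ∑ k ∈ Finset.range ((2*n+4)+1), p (n+2) k :=
    (TT_ext _ _ (by omega)).symm
  rw [h5, Finset.sum_range_succ']
  rw [Finset.sum_congr rfl (fun k _ => p_rec n k), Finset.sum_add_distrib, ← Finset.mul_sum]
  have e1 : ∑ k ∈ Finset.range (2*n+4), p n k = TT n := TT_ext _ _ (by omega)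
  have e2 : (∑ k ∈ Finset.range (2*n+4), p (n+1) (k+1)) + p (n+1) 0 = TT (n+1) := by
    rw [← Finset.sum_range_succ']; exact TT_ext _ _ (by omega)
  rw [p_zero] at *
  omega

lemma NN_rec (n : ℕ) : NN (n+2) = NN (n+1) + 2 * NN n + 2 * TT n := by
  have h5 : NN (n+2) = ∑ k ∈ Finset.range ((2*n+4)+1), k * p (n+2) k :=
    (NN_ext _ _ (by omega)).symm
  rw [h5, Finset.sum_range_succ']
  have key : ∀ k, (k+1) * p (n+2) (k+1)
      = (k+1) * p (n+1) (k+1) + (2 * (k * p n k) + 2 * p n k) := by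
    intro k; rw [p_rec]; ring
  rw [Finset.sum_congr rfl (fun k _ => key k), Finset.sum_add_distrib, Finset.sum_add_distrib,
    ← Finset.mul_sum, ← Finset.mul_sum]
  have e1 : ∑ k ∈ Finset.range (2*n+4), k * p n k = NN n := NN_ext _ _ (by omega)
  have e1' : ∑ k ∈ Finset.range (2*n+4), p n k = TT n := TT_ext _ _ (by omega)
  have e2 : (∑ k ∈ Finset.range (2*n+4), (k+1) * p (n+1) (k+1)) + 0 * p (n+1) 0 = NN (n+1) := by
    rw [← Finset.sum_range_succ' (fun k => k * p (n+1) k)]; exact NN_ext _ _ (by omega)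
  omega

lemma TT_zero : TT 0 = 1 := by
  rw [TT]; simp [p_zero]

lemma NN_zero : NN 0 = 0 := by
  rw [NN]; simp

lemma TT_one : TT 1 = 3 := by
  rw [TT, show 2*1+1 = 3 from rfl, Finset.sum_range_succ, Finset.sum_range_succ,
    Finset.sum_range_one, p_zero, p_one_one, p_one_two]

lemma NN_one : NN 1 = 2 := by
  rw [NN, show 2*1+1 = 3 from rfl, Finset.sum_range_succ, Finset.sum_range_succ,
    Finset.sum_range_one, p_one_one, p_one_two]
  norm_num

lemma closed (n : ℕ) :
    ((3:ℤ) * TT n = 2^(n+2) - (-1)^n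
      ∧ (27:ℤ) * NN n = (12*n+8)*2^n - (6*n+8)*(-1)^n)
    ∧ ((3:ℤ) * TT (n+1) = 2^(n+3) - (-1)^(n+1)
      ∧ (27:ℤ) * NN (n+1) = (12*(n+1)+8)*2^(n+1) - (6*(n+1)+8)*(-1)^(n+1)) := by
  induction n with
  | zero => norm_num [TT_zero, NN_zero, TT_one, NN_one]
  | succ n ih =>
    obtain ⟨⟨h1, h2⟩, h3, h4⟩ := ih
    refine ⟨⟨h3, h4⟩, ?_, ?_⟩ <;> rw [show n+1+1 = n+2 from rfl]
    · have hz : ((TT (n+2) : ℤ)) = TT (n+1) + 2 * TT n := by exact_mod_cast TT_rec n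
      linear_combination 3 * hz + h3 + 2 * h1
    · have hz : ((NN (n+2) : ℤ)) = NN (n+1) + 2 * NN n + 2 * TT n := by
        exact_mod_cast NN_rec n
      push_cast
      linear_combination 27 * hz + h4 + 2 * h2 + 18 * h1

lemma tsum_T (n : ℕ) : ∑' k : ℕ, (p n k : ℝ) = (TT n : ℝ) := by
  rw [tsum_eq_sum (s := Finset.range (2*n+1))
    (fun b hb => by rw [p_card_le n b (by rw [Finset.mem_range] at hb; omega)]; norm_num), TT]
  push_cast
  rfl

lemma tsum_N (n : ℕ) : ∑' k : ℕ, (k : ℝ) * (p n k : ℝ) = (NN n : ℝ) := by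
  rw [tsum_eq_sum (s := Finset.range (2*n+1))
    (fun b hb => by rw [p_card_le n b (by rw [Finset.mem_range] at hb; omega)]; norm_num), NN]
  push_cast
  rfl


/-- `μ n = n/3 + 2/9 + O(n / 2^n)`. -/
theorem kentucky_mean_asymptotic :
    ∃ C : ℝ, 0 < C ∧ ∃ N : ℕ, ∀ n : ℕ, N ≤ n →
      |mu n - (n : ℝ) / 3 - 2 / 9| ≤ C * n / 2 ^ n := by
  refine ⟨1, one_pos, 1, fun n hn => ?_⟩
  obtain ⟨⟨h1, h2⟩, -⟩ := closed n
  set t : ℝ := (TT n : ℝ) with hts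
  set s : ℝ := (NN n : ℝ) with hss
  set ε : ℝ := (-1 : ℝ)^n with he
  have hε : ε = 1 ∨ ε = -1 := by
    rcases Nat.even_or_odd n with h | h
    · left; rw [he, h.neg_one_pow]
    · right; rw [he, h.neg_one_pow]
  have h2n : (1:ℝ) ≤ 2^n := one_le_pow₀ one_le_two
  have ht : 3 * t = 4 * 2^n - ε := by
    have : ((3 * TT n : ℤ) : ℝ) = ((2^(n+2) - (-1)^n : ℤ) : ℝ) := by rw [h1]
    push_cast at this
    rw [hts, he]
    linear_combination this
  have hs : 27 * s = (12*n+8) * 2^n - (6*n+8) * ε := by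
    have : ((27 * NN n : ℤ) : ℝ) = (((12*n+8)*2^n - (6*n+8)*(-1)^n : ℤ) : ℝ) := by rw [h2]
    push_cast at this
    rw [hss, he]
    linear_combination this
  have htpos : 0 < t := by
    rcases hε with h | h <;> rw [h] at ht <;> nlinarith
  have key : 9 * s - (3*n+2) * t = -(n+2) * ε := by
    linear_combination (1/3 : ℝ) * hs - ((3*(n:ℝ)+2)/3) * ht
  have hmu : mu n - (n : ℝ)/3 - 2/9 = (-(n+2) * ε) / (9 * t) := by
    rw [mu, tsum_N, tsum_T, ← hts, ← hss, ← key]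
    field_simp
    ring
  rw [hmu, abs_div, abs_of_pos (by linarith : (0:ℝ) < 9 * t)]
  have habs : |(-((n:ℝ)+2)) * ε| = (n:ℝ) + 2 := by
    have hn0 : (0:ℝ) ≤ (n:ℝ) := Nat.cast_nonneg n
    rcases hε with h | h <;> rw [h] <;>
      [rw [mul_one, abs_neg, abs_of_nonneg (by linarith)];
       rw [mul_neg_one, neg_neg, abs_of_nonneg (by linarith)]]
  rw [habs, one_mul]
  rw [div_le_div_iff₀ (by linarith) (by positivity)]
  have hn1 : (1:ℝ) ≤ (n:ℝ) := by exact_mod_cast hn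
  rcases hε with h | h <;> rw [h] at ht <;> nlinarith [mul_le_mul_of_nonneg_left h2n (by linarith : (0:ℝ) ≤ (n:ℝ) - 1)]
end
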